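/- arXiv:0710.0887 — 2 statements merged into one kernel-verified Lean document; each statement's English description precedes it below -/
import Mathlib

section
/- Let V be a vertex operator algebra of CFT-type and let X be a set of homogeneous representatives of a spanning set of V/C_2(V). Then V is spanned by elements u^{(1)}_{n_1} ⋯ u^{(r)}_{n_r} 1 with r ∈ ℕ, u^{(i)} ∈ X, and strictly increasing negative indices n_1 < n_2 < ⋯ < n_r < 0 (a difference-one condition). -/
/-!
Rewrite monomials `u¹_{n₁} ⋯ uʳ_{nᵣ} 1` in homogeneous vectors until they have the required shape.
A weight-zero vector is a multiple of the vacuum, whose modes act trivially. A vector of weight `α`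
outside `X` lies in `span (X ∩ V_α) + (C₂(V) ∩ V_α)`, and the iterate formula expands
`(b_{-2}c)_n` into products of modes of `b` and `c`, which have lower total weight. The commutator
formula moves nonnegative modes to the right, where they kill the vacuum, and sorts negative
modes, again up to terms of lower weight. Finally `x_{-m} y_{-m}` is solved for from the iterate
formula for `(x_{-1}y)_{-2m+1}`: the other terms are shorter words, words with a nonnegative mode,
or words whose negative indices are further apart. A lexicographic measure decreases at every step.
-/

open scoped BigOperators

namespace VOAPaper

/-- Integer binomial coefficient `C(m, i)` for `m : ℤ`, `i : ℕ`. -/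
def zchoose (m : ℤ) (i : ℕ) : ℤ :=
  if 0 ≤ m then ((m.toNat).choose i : ℤ)
  else (-1) ^ i * ((((i : ℤ) - m - 1).toNat).choose i : ℤ)

variable (V : Type) [AddCommGroup V] [Module ℂ V]

/-- A vertex algebra structure on `V`: modes `u_n`, vacuum, truncation,
vacuum/creation axioms, and the Borcherds (Jacobi) identity. -/
structure VertexAlg where
  mode : V →ₗ[ℂ] ℤ → Module.End ℂ V
  vac : V
  trunc : ∀ u w : V, ∃ N : ℤ, ∀ n : ℤ, N ≤ n → mode u n w = 0
  vac_mode : ∀ (n : ℤ) (w : V), mode vac n w = if n = -1 then w else 0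
  creation_neg_one : ∀ u : V, mode u (-1) vac = u
  creation_nonneg : ∀ (u : V) (n : ℤ), 0 ≤ n → mode u n vac = 0
  borcherds : ∀ (u v w : V) (p q m : ℤ),
    (∑ᶠ i : ℕ, zchoose m i • mode (mode u (p + i) v) (m + q - i) w) =
    (∑ᶠ i : ℕ, ((-1 : ℤ) ^ i * zchoose p i) •
      (mode u (p + m - i) (mode v (q + i) w)
        - (p.negOnePow : ℤ) • mode v (p + q - i) (mode u (m + i) w)))

/-- A vertex operator algebra of CFT-type: a vertex algebra with conformal
vector `ω`, central charge `c`, an `L(0)`-grading `V = ⊕_{n ≥ 0} V_n` with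
`V_0 = ℂ 1`, Virasoro relations, and the `L(-1)`-derivation property. -/
structure VOA extends VertexAlg V where
  ω : V
  c : ℂ
  grading : ℤ → Submodule ℂ V
  internal : DirectSum.IsInternal grading
  neg_bot : ∀ n : ℤ, n < 0 → grading n = ⊥
  L0_eigen : ∀ (n : ℤ) (v : V), v ∈ grading n → mode ω 1 v = (n : ℂ) • v
  vac_grade : vac ∈ grading 0
  cft : grading 0 = Submodule.span ℂ {vac}
  ω_grade : ω ∈ grading 2
  virasoro : ∀ m n : ℤ,
    mode ω (m + 1) * mode ω (n + 1) - mode ω (n + 1) * mode ω (m + 1)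
      = (m - n) • mode ω (m + n + 1)
        + (if m + n = 0 then ((m ^ 3 - m : ℂ) / 12) * c else 0) • (1 : Module.End ℂ V)
  Lneg1_deriv : ∀ (u : V) (n : ℤ), mode (mode ω 0 u) n = (-n) • mode u (n - 1)

/-- A weak module for (the underlying vertex algebra of) `V`. -/
structure WeakMod (A : VertexAlg V) (M : Type) [AddCommGroup M] [Module ℂ M] where
  mmode : V →ₗ[ℂ] ℤ → Module.End ℂ M
  trunc : ∀ (v : V) (w : M), ∃ N : ℤ, ∀ n : ℤ, N ≤ n → mmode v n w = 0
  vac_mode : ∀ (n : ℤ) (w : M), mmode A.vac n w = if n = -1 then w else 0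
  borcherds : ∀ (u v : V) (w : M) (p q m : ℤ),
    (∑ᶠ i : ℕ, zchoose m i • mmode (A.mode u (p + i) v) (m + q - i) w) =
    (∑ᶠ i : ℕ, ((-1 : ℤ) ^ i * zchoose p i) •
      (mmode u (p + m - i) (mmode v (q + i) w)
        - (p.negOnePow : ℤ) • mmode v (p + q - i) (mmode u (m + i) w)))

/-- An ℕ-gradable weak module: a weak module with a compatible
lower-truncated grading `M = ⊕_{n ≥ 0} M(n)`. -/
structure NGradedMod (W : VOA V) (M : Type) [AddCommGroup M] [Module ℂ M]
    extends WeakMod V W.toVertexAlg M where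
  mgrading : ℤ → Submodule ℂ M
  internal : DirectSum.IsInternal mgrading
  neg_bot : ∀ n : ℤ, n < 0 → mgrading n = ⊥
  compat : ∀ (r : ℤ) (v : V), v ∈ W.grading r → ∀ (m n : ℤ), ∀ w ∈ mgrading n,
    mmode v m w ∈ mgrading (n + r - m - 1)

/-- Iterated application of modes: `applyModes [(u¹,n₁),…,(uʳ,nᵣ)] w = u¹_{n₁} ⋯ uʳ_{nᵣ} w`. -/
def applyModes (A : VertexAlg V) : List (V × ℤ) → V → V
  | [], w => w
  | p :: L, w => A.mode p.1 p.2 (applyModes A L w)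

/-- Iterated application of module modes. -/
def applyModesM {M : Type} [AddCommGroup M] [Module ℂ M] {A : VertexAlg V}
    (Mod : WeakMod V A M) : List (V × ℤ) → M → M
  | [], w => w
  | p :: L, w => Mod.mmode p.1 p.2 (applyModesM Mod L w)

/-- The subspace `C_n(V) = span{ u_{-n} v }`. -/
def Cspace (A : VertexAlg V) (n : ℕ) : Submodule ℂ V :=
  Submodule.span ℂ { x | ∃ u v : V, x = A.mode u (-(n : ℤ)) v }

/-- The subspace `C_1(V) = span{ u_{-1} v, L(-1)u : u, v ∈ V_+ }`. -/
def C1space (W : VOA V) : Submodule ℂ V :=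
  Submodule.span ℂ
    ({ x | ∃ u v : V, (∃ r : ℤ, 0 < r ∧ u ∈ W.grading r) ∧
        (∃ r : ℤ, 0 < r ∧ v ∈ W.grading r) ∧ x = W.mode u (-1) v }
      ∪ { x | ∃ u : V, (∃ r : ℤ, 0 < r ∧ u ∈ W.grading r) ∧ x = W.mode W.ω 0 u })

/-- A submodule invariant under all modes. -/
def Invariant {M : Type} [AddCommGroup M] [Module ℂ M] {A : VertexAlg V}
    (Mod : WeakMod V A M) (N : Submodule ℂ M) : Prop :=
  ∀ (v : V) (n : ℤ), ∀ w ∈ N, Mod.mmode v n w ∈ N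

/-- Irreducibility of a weak module. -/
def IsIrreducibleMod {M : Type} [AddCommGroup M] [Module ℂ M] {A : VertexAlg V}
    (Mod : WeakMod V A M) : Prop :=
  (⊤ : Submodule ℂ M) ≠ ⊥ ∧
    ∀ N : Submodule ℂ M, Invariant V Mod N → N = ⊥ ∨ N = ⊤


section Relations

variable {V}

lemma zchoose_zero (i : ℕ) : zchoose 0 i = if i = 0 then 1 else 0 := by
  cases i <;> simp [zchoose]

lemma zchoose_one (i : ℕ) : zchoose 1 i = if i ≤ 1 then 1 else 0 := by
  rcases i with _ | _ | i <;> simp [zchoose, Nat.choose_eq_zero_of_lt]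

lemma zchoose_neg_one (i : ℕ) : zchoose (-1) i = (-1) ^ i := by
  simp [zchoose]

lemma zchoose_neg_two (i : ℕ) : zchoose (-2) i = (-1) ^ i * (i + 1) := by
  rw [zchoose, if_neg (by norm_num), show ((i : ℤ) - -2 - 1).toNat = i + 1 by omega,
    Nat.choose_succ_self_right]
  push_cast
  ring

theorem _root_.Submodule.finsum_mem {R M : Type*} {ι : Sort*} [Semiring R] [AddCommMonoid M]
    [Module R M] (S : Submodule R M) {f : ι → M} (h : ∀ i, f i ∈ S) : ∑ᶠ i, f i ∈ S :=
  finsum_induction (· ∈ S) S.zero_mem (fun _ _ => S.add_mem) h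

namespace VertexAlg

variable (A : VertexAlg V)

theorem commutator_formula (u v w : V) (m q : ℤ) :
    A.mode u m (A.mode v q w) = A.mode v q (A.mode u m w)
      + ∑ᶠ i : ℕ, zchoose m i • A.mode (A.mode u i v) (m + q - i) w := by
  have h := A.borcherds u v w 0 q m
  conv_rhs at h => rw [finsum_eq_single _ 0 fun i hi => by simp [zchoose_zero, hi]]
  simp only [zero_add] at h
  simp [h, zchoose_zero]

theorem iterate_formula (u v w : V) (p q : ℤ) :
    A.mode (A.mode u p v) q w = ∑ᶠ i : ℕ, ((-1 : ℤ) ^ i * zchoose p i) •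
      (A.mode u (p - i) (A.mode v (q + i) w)
        - (p.negOnePow : ℤ) • A.mode v (p + q - i) (A.mode u i w)) := by
  have h := A.borcherds u v w p q 0
  conv_lhs at h => rw [finsum_eq_single _ 0 fun i hi => by simp [zchoose_zero, hi]]
  simpa [zchoose_zero] using h

theorem iterate_formula_neg_one (u v w : V) (q : ℤ) :
    A.mode (A.mode u (-1) v) q w = ∑ᶠ i : ℕ,
      (A.mode u (-1 - i) (A.mode v (q + i) w) + A.mode v (q - 1 - i) (A.mode u i w)) := by
  rw [iterate_formula]
  refine finsum_congr fun i => ?_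
  rw [zchoose_neg_one, ← mul_pow, show (-1 + q - i : ℤ) = q - 1 - i by ring]
  simp

theorem hasFiniteSupport_iterate_neg_one (u v w : V) (q : ℤ) :
    (fun i : ℕ => A.mode u (-1 - i) (A.mode v (q + i) w)
      + A.mode v (q - 1 - i) (A.mode u i w)).HasFiniteSupport := by
  obtain ⟨N₁, hN₁⟩ := A.trunc v w
  obtain ⟨N₂, hN₂⟩ := A.trunc u w
  refine (Set.finite_Iio (max (N₁ - q).toNat N₂.toNat)).subset fun i hi => ?_
  by_contra hge
  simp only [Set.mem_Iio, not_lt, max_le_iff] at hge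
  exact hi (by simp [hN₁ (q + i) (by omega), hN₂ i (by omega)])

theorem iterate_formula_neg_two (u v w : V) (q : ℤ) :
    A.mode (A.mode u (-2) v) q w = ∑ᶠ i : ℕ, ((i : ℤ) + 1) •
      (A.mode u (-2 - i) (A.mode v (q + i) w) - A.mode v (q - 2 - i) (A.mode u i w)) := by
  rw [iterate_formula]
  refine finsum_congr fun i => ?_
  rw [zchoose_neg_two, ← mul_assoc, ← mul_pow, show (-2 + q - i : ℤ) = q - 2 - i by ring]
  simp [show ((2 : ℤ).negOnePow : ℤ) = 1 by decide]

end VertexAlg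

end Relations

namespace VOA

variable {V} (W : VOA V)

theorem grading_eq_eigenspace (n : ℤ) :
    W.grading n = (W.mode W.ω 1).eigenspace (n : ℂ) := by
  have hindep : iSupIndep fun n : ℤ => (W.mode W.ω 1).eigenspace (n : ℂ) :=
    (Module.End.eigenspaces_iSupIndep _).comp Int.cast_injective
  have hle : W.grading ≤ fun n : ℤ => (W.mode W.ω 1).eigenspace (n : ℂ) :=
    fun n v hv => Module.End.mem_eigenspace_iff.mpr (W.L0_eigen n v hv)
  exact congrFun ((hindep.le_iff_eq_of_iSup_eq_top W.internal.submodule_iSup_eq_top).mp hle) n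

theorem mode_mem_grading {a b : ℤ} {u w : V} (hu : u ∈ W.grading a) (hw : w ∈ W.grading b)
    (n : ℤ) : W.mode u n w ∈ W.grading (a + b - n - 1) := by
  have hcomm := W.commutator_formula W.ω u w 1 n
  rw [finsum_eq_sum_of_support_subset (s := Finset.range 2) _ fun i hi => by
    by_contra h
    simp_all [zchoose_one]] at hcomm
  simp only [Finset.sum_range_succ, zchoose_one] at hcomm
  simp [W.Lneg1_deriv, W.L0_eigen a u hu, W.L0_eigen b w hw] at hcomm
  rw [grading_eq_eigenspace, Module.End.mem_eigenspace_iff, hcomm]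
  push_cast
  module

theorem eq_zero_of_mem_grading_of_neg {v : V} {n : ℤ} (hv : v ∈ W.grading n) (hn : n < 0) :
    v = 0 := by
  simpa [W.neg_bot n hn] using hv

theorem exists_eq_smul_vac {v : V} (hv : v ∈ W.grading 0) : ∃ c : ℂ, v = c • W.vac := by
  rw [W.cft, Submodule.mem_span_singleton] at hv
  exact hv.imp fun _ h => h.symm

end VOA

section Generators

variable {V} (W : VOA V) (X : Set V)

def gradedXSpan (α : ℤ) : Submodule ℂ V :=
  Submodule.span ℂ {x | x ∈ X ∧ x ∈ W.grading α}

def gradedC2Span (α : ℤ) : Submodule ℂ V :=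
  Submodule.span ℂ {z | ∃ β γ b c, 1 ≤ β ∧ 0 ≤ γ ∧ β + γ + 1 = α ∧
    b ∈ W.grading β ∧ c ∈ W.grading γ ∧ z = W.mode b (-2) c}

theorem mode_neg_two_mem_iSup_gradedC2Span {β γ : ℤ} {b c : V} (hb : b ∈ W.grading β)
    (hc : c ∈ W.grading γ) : W.mode b (-2) c ∈ ⨆ α, gradedC2Span W α := by
  rcases lt_or_ge γ 0 with hγ | hγ
  · simp [W.eq_zero_of_mem_grading_of_neg hc hγ]
  rcases lt_trichotomy β 0 with hβ | rfl | hβ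
  · simp [W.eq_zero_of_mem_grading_of_neg hb hβ]
  · obtain ⟨a, rfl⟩ := W.exists_eq_smul_vac hb
    simp [W.vac_mode]
  · exact Submodule.mem_iSup_of_mem (β + γ + 1)
      (Submodule.subset_span ⟨β, γ, b, c, hβ, hγ, rfl, hb, hc, rfl⟩)

theorem Cspace_two_le_iSup_gradedC2Span :
    Cspace V W.toVertexAlg 2 ≤ ⨆ α, gradedC2Span W α := by
  have htop (v : V) : v ∈ ⨆ n, W.grading n := by
    simp [W.internal.submodule_iSup_eq_top]
  rw [Cspace, Submodule.span_le]
  rintro _ ⟨b, c, rfl⟩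
  refine Submodule.iSup_induction _ (motive := fun b => W.mode b (-2) c ∈ _) (htop b)
    (fun β b hb => ?_) (by simp) fun b b' h h' => by simpa using add_mem h h'
  exact Submodule.iSup_induction _ (motive := fun c => W.mode b (-2) c ∈ _) (htop c)
    (fun γ c hc => mode_neg_two_mem_iSup_gradedC2Span W hb hc) (by simp)
    fun c c' h h' => by simpa using add_mem h h'

theorem grading_eq_gradedXSpan_sup (wt : V → ℤ) (hhom : ∀ u ∈ X, u ∈ W.grading (wt u))
    (hspan : Submodule.span ℂ ((Cspace V W.toVertexAlg 2).mkQ '' X) = ⊤) (α : ℤ) :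
    W.grading α = gradedXSpan W X α ⊔ gradedC2Span W α := by
  set P := fun α => gradedXSpan W X α ⊔ gradedC2Span W α
  have hle : P ≤ W.grading := fun α => sup_le
    (Submodule.span_le.mpr fun x hx => hx.2)
    (Submodule.span_le.mpr fun _ ⟨β, γ, b, c, _, _, hα, hb, hc, hz⟩ => by
      rw [SetLike.mem_coe, hz, ← hα, show β + γ + 1 = β + γ - -2 - 1 by ring]
      exact W.mode_mem_grading hb hc (-2))
  have hX : Submodule.span ℂ X ≤ iSup P := Submodule.span_le.mpr fun x hx =>
    Submodule.mem_iSup_of_mem (wt x)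
      (Submodule.mem_sup_left (Submodule.subset_span ⟨hx, hhom x hx⟩))
  have hC2 : Cspace V W.toVertexAlg 2 ≤ iSup P :=
    (Cspace_two_le_iSup_gradedC2Span W).trans (iSup_mono fun _ => le_sup_right)
  have htop : iSup P = ⊤ := by
    rw [Submodule.span_image, Submodule.map_mkQ_eq_top] at hspan
    exact top_le_iff.mp (hspan ▸ sup_le hC2 hX)
  exact (congrFun ((W.internal.submodule_iSupIndep.le_iff_eq_of_iSup_eq_top htop).mp hle) α).symm

end Generators

section Lists

def pairCount {α : Type*} (r : α → α → Bool) : List α → ℕ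
  | [] => 0
  | a :: t => t.countP (r a) + pairCount r t

theorem pairCount_eq_zero {α : Type*} {r : α → α → Bool} {w : List α}
    (h : ∀ a ∈ w, ∀ b, r a b = false) : pairCount r w = 0 := by
  induction w with
  | nil => rfl
  | cons a t ih =>
    simp only [pairCount, List.mem_cons, forall_eq_or_imp] at h ⊢
    simp [h.1, ih h.2]

theorem pairCount_swap_lt {α : Type*} {r : α → α → Bool} (u t : List α) {a b : α}
    (hab : r a b = true) (hba : r b a = false) :
    pairCount r (u ++ b :: a :: t) < pairCount r (u ++ a :: b :: t) := by
  induction u with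
  | nil => simp [pairCount, hab, hba]; omega
  | cons c u ih =>
    simp only [List.cons_append, pairCount]
    rw [((List.Perm.swap a b t).append_left u).countP_eq]
    omega

theorem sum_map_sq_le_sq_sum_of_nonpos (L : List ℤ) (h : ∀ x ∈ L, x ≤ 0) :
    (L.map (· ^ 2)).sum ≤ L.sum ^ 2 := by
  induction L with
  | nil => simp
  | cons a L ih =>
    simp only [List.mem_cons, forall_eq_or_imp] at h
    have hL : L.sum ≤ 0 := by simpa using L.sum_le_card_nsmul 0 h.2
    simp only [List.map_cons, List.sum_cons]
    nlinarith [ih h.2, mul_nonneg_of_nonpos_of_nonpos h.1 hL]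

theorem exists_split_at_last {α : Type*} (P : α → Prop) {w : List α} (h : ∃ a ∈ w, P a) :
    ∃ u a t, w = u ++ a :: t ∧ P a ∧ ∀ b ∈ t, ¬ P b := by
  induction w with
  | nil => simp at h
  | cons c w ih =>
    by_cases hw : ∃ a ∈ w, P a
    · obtain ⟨u, a, t, rfl, ha, ht⟩ := ih hw
      exact ⟨c :: u, a, t, rfl, ha, ht⟩
    · have hc : P c := by simpa [hw] using h
      exact ⟨[], c, w, rfl, hc, fun b hb hPb => hw ⟨b, hb, hPb⟩⟩

end Lists

/-- The letter `⟨v, d, n⟩` stands for the mode `v_n`, where `v` is meant to lie in `V_d`; the word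
`[l₁, …, lᵣ]` stands for `(l₁)_{n₁} ⋯ (lᵣ)_{nᵣ} 1`. -/
structure Letter (E : Type*) where
  vec : E
  wt : ℤ
  idx : ℤ

section Words

variable {V} (W : VOA V) (X : Set V)

theorem applyModes_eq_prod (A : VertexAlg V) (L : List (V × ℤ)) (v : V) :
    applyModes V A L v = (L.map fun p => A.mode p.1 p.2).prod v := by
  induction L with
  | nil => rfl
  | cons p L ih => simp [applyModes, ih, Module.End.mul_apply]

def wordOp (w : List (Letter V)) : Module.End ℂ V :=
  (w.map fun l => W.mode l.vec l.idx).prod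

def wordValue (w : List (Letter V)) : V :=
  wordOp W w W.vac

@[simp]
lemma wordValue_nil : wordValue W [] = W.vac :=
  rfl

@[simp]
lemma wordValue_cons (l : Letter V) (w : List (Letter V)) :
    wordValue W (l :: w) = W.mode l.vec l.idx (wordValue W w) := by
  simp [wordValue, wordOp, Module.End.mul_apply]

lemma wordValue_append (u w : List (Letter V)) :
    wordValue W (u ++ w) = wordOp W u (wordValue W w) := by
  simp [wordValue, wordOp, Module.End.mul_apply]

def WellGraded (w : List (Letter V)) : Prop :=
  ∀ l ∈ w, l.vec ∈ W.grading l.wt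

@[simp]
lemma wellGraded_nil : WellGraded W [] := by
  simp [WellGraded]

@[simp]
lemma wellGraded_cons {l : Letter V} {w : List (Letter V)} :
    WellGraded W (l :: w) ↔ l.vec ∈ W.grading l.wt ∧ WellGraded W w := by
  simp [WellGraded]

@[simp]
lemma wellGraded_append {u w : List (Letter V)} :
    WellGraded W (u ++ w) ↔ WellGraded W u ∧ WellGraded W w := by
  simp [WellGraded, or_imp, forall_and]

def strictSpan : Submodule ℂ V :=
  Submodule.span ℂ { x | ∃ L : List (V × ℤ),
      (∀ p ∈ L, p.1 ∈ X) ∧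
      L.IsChain (fun p q => p.2 < q.2) ∧
      (∀ p ∈ L, p.2 < 0) ∧
      x = applyModes V W.toVertexAlg L W.vac }

theorem wordValue_mem_strictSpan_of_isChain {w : List (Letter V)} (hX : ∀ l ∈ w, l.vec ∈ X)
    (hneg : ∀ l ∈ w, l.idx < 0) (hchain : w.IsChain fun a b => a.idx < b.idx) :
    wordValue W w ∈ strictSpan W X := by
  refine Submodule.subset_span ⟨w.map fun l => (l.vec, l.idx), by simpa using hX,
    (List.isChain_map _).mpr hchain, by simpa using hneg, ?_⟩
  simp [applyModes_eq_prod, wordValue, wordOp, Function.comp_def]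

theorem wordValue_eq_zero_of_wt_neg {w : List (Letter V)} (hw : WellGraded W w)
    (h : ∃ l ∈ w, l.wt < 0) : wordValue W w = 0 := by
  obtain ⟨l, hl, hneg⟩ := h
  have hzero : l.vec = 0 := W.eq_zero_of_mem_grading_of_neg (hw l hl) hneg
  rw [wordValue, wordOp, List.prod_eq_zero (List.mem_map.mpr ⟨l, hl, by simp [hzero]⟩)]
  rfl

end Words

section Measure

variable {E : Type*} (X : Set E) [DecidablePred (· ∈ X)]

def Letter.key (l : Letter E) : E × ℤ := (l.vec, l.wt)

def weight (w : List (Letter E)) : ℕ := (w.map fun l => l.wt.toNat).sum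

def nonXCount (w : List (Letter E)) : ℕ := w.countP fun l => l.vec ∉ X

def allNegIndicator (w : List (Letter E)) : ℕ := if ∀ l ∈ w, l.idx < 0 then 1 else 0

def nonnegDepth (w : List (Letter E)) : ℕ := pairCount (fun a _ => decide (0 ≤ a.idx)) w

def spreadDefect (w : List (Letter E)) : ℕ :=
  ((w.map Letter.idx).sum ^ 2 - (w.map fun l : Letter E => l.idx ^ 2).sum).toNat

def inversions (w : List (Letter E)) : ℕ := pairCount (fun a b => decide (b.idx ≤ a.idx)) w

def coarseMeasure (w : List (Letter E)) : ℕ ×ₗ ℕ ×ₗ ℕ :=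
  toLex (weight w, toLex (w.length, nonXCount X w))

def fineMeasure (w : List (Letter E)) : ℕ ×ₗ ℕ ×ₗ ℕ ×ₗ ℕ :=
  toLex (allNegIndicator w, toLex (nonnegDepth w, toLex (spreadDefect w, inversions w)))

/-- Splitting `(b_{-2}c)_n` and commutator terms lower `weight`; dropping a vacuum letter or
merging `x_{-1}y` into one letter lowers the length; replacing a letter by an element of `X` lowers
`nonXCount`; moving a nonnegative mode to the right lowers `nonnegDepth`; in an all-negative word,
producing a nonnegative mode lowers `allNegIndicator`, spreading `x_{-m}y_{-m}` apart lowers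
`spreadDefect` and swapping two out-of-order modes lowers `inversions`. -/
def rewriteMeasure (w : List (Letter E)) :
    (ℕ ×ₗ ℕ ×ₗ ℕ) ×ₗ (ℕ ×ₗ ℕ ×ₗ ℕ ×ₗ ℕ) :=
  toLex (coarseMeasure X w, fineMeasure w)

variable {X} {w w' : List (Letter E)}

theorem rewriteMeasure_lt_of_weight_lt (h : weight w' < weight w) :
    rewriteMeasure X w' < rewriteMeasure X w := by
  simp [rewriteMeasure, coarseMeasure, Prod.Lex.toLex_lt_toLex, h]

theorem rewriteMeasure_lt_of_length_lt (h : weight w' = weight w)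
    (hlen : w'.length < w.length) : rewriteMeasure X w' < rewriteMeasure X w := by
  simp [rewriteMeasure, coarseMeasure, Prod.Lex.toLex_lt_toLex, h, hlen]

theorem rewriteMeasure_lt_of_nonXCount_lt (h : weight w' = weight w)
    (hlen : w'.length = w.length) (hX : nonXCount X w' < nonXCount X w) :
    rewriteMeasure X w' < rewriteMeasure X w := by
  simp [rewriteMeasure, coarseMeasure, Prod.Lex.toLex_lt_toLex, h, hlen, hX]

theorem rewriteMeasure_lt_of_fineMeasure_lt (hkey : (w'.map Letter.key).Perm (w.map Letter.key))
    (h : fineMeasure w' < fineMeasure w) : rewriteMeasure X w' < rewriteMeasure X w := by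
  have hweight := (hkey.map fun k : E × ℤ => k.2.toNat).sum_eq
  have hcount := hkey.countP_eq fun k : E × ℤ => decide (k.1 ∉ X)
  have hlen := hkey.length_eq
  simp only [List.map_map, List.countP_map, List.length_map] at hweight hcount hlen
  have hcoarse : coarseMeasure X w' = coarseMeasure X w := by
    simp only [coarseMeasure, weight, nonXCount, hlen]
    simp only [Function.comp_def, Letter.key] at hweight hcount
    rw [hweight]
    exact congrArg (fun n => toLex (_, toLex (w.length, n))) hcount
  simp [rewriteMeasure, Prod.Lex.toLex_lt_toLex, hcoarse, h]

end Measure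

section FineMeasure

variable {E : Type*} {X : Set E}

theorem allNegIndicator_eq_one {w : List (Letter E)} (hw : ∀ l ∈ w, l.idx < 0) :
    allNegIndicator w = 1 := if_pos hw

theorem allNegIndicator_eq_zero {w : List (Letter E)} (hw : ∃ l ∈ w, 0 ≤ l.idx) :
    allNegIndicator w = 0 := by
  obtain ⟨l, hl, hnn⟩ := hw
  exact if_neg fun h => (h l hl).not_ge hnn

theorem nonnegDepth_eq_zero {w : List (Letter E)} (hw : ∀ l ∈ w, l.idx < 0) :
    nonnegDepth w = 0 :=
  pairCount_eq_zero fun a ha _ => by simpa using hw a ha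

theorem fineMeasure_lt_of_allNeg {w w' : List (Letter E)} (hw : ∀ l ∈ w, l.idx < 0)
    (hw' : ∃ l ∈ w', 0 ≤ l.idx) : fineMeasure w' < fineMeasure w := by
  simp [fineMeasure, Prod.Lex.toLex_lt_toLex, allNegIndicator_eq_one hw,
    allNegIndicator_eq_zero hw']

theorem fineMeasure_swap_lt_of_nonneg (u t : List (Letter E)) {x y : Letter E}
    (hx : 0 ≤ x.idx) (hy : y.idx < 0) :
    fineMeasure (u ++ y :: x :: t) < fineMeasure (u ++ x :: y :: t) := by
  have hdepth : nonnegDepth (u ++ y :: x :: t) < nonnegDepth (u ++ x :: y :: t) :=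
    pairCount_swap_lt u t (by simpa using hx) (by simpa using hy)
  simp [fineMeasure, Prod.Lex.toLex_lt_toLex, hdepth,
    allNegIndicator_eq_zero (w := u ++ y :: x :: t) ⟨x, by simp, hx⟩,
    allNegIndicator_eq_zero (w := u ++ x :: y :: t) ⟨x, by simp, hx⟩]

theorem fineMeasure_swap_lt_of_neg (u t : List (Letter E)) {x y : Letter E}
    (hw : ∀ l ∈ u ++ x :: y :: t, l.idx < 0) (hyx : y.idx < x.idx) :
    fineMeasure (u ++ y :: x :: t) < fineMeasure (u ++ x :: y :: t) := by
  have hperm : (u ++ y :: x :: t).Perm (u ++ x :: y :: t) := (List.Perm.swap x y t).append_left u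
  have hw' : ∀ l ∈ u ++ y :: x :: t, l.idx < 0 := fun l hl => hw l (hperm.subset hl)
  have hdefect : spreadDefect (u ++ y :: x :: t) = spreadDefect (u ++ x :: y :: t) := by
    simp only [spreadDefect, List.map_append, List.map_cons, List.sum_append, List.sum_cons]
    ring_nf
  have hinv : inversions (u ++ y :: x :: t) < inversions (u ++ x :: y :: t) :=
    pairCount_swap_lt u t (by simpa using hyx.le) (by simpa using hyx)
  simp [fineMeasure, Prod.Lex.toLex_lt_toLex, allNegIndicator_eq_one hw,
    allNegIndicator_eq_one hw', nonnegDepth_eq_zero hw, nonnegDepth_eq_zero hw', hdefect, hinv]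

theorem fineMeasure_lt_of_sum_sq_lt {w w' : List (Letter E)} (hw : ∀ l ∈ w, l.idx < 0)
    (hw' : ∀ l ∈ w', l.idx < 0) (hsum : (w'.map Letter.idx).sum = (w.map Letter.idx).sum)
    (hsq : (w.map fun l => l.idx ^ 2).sum < (w'.map fun l => l.idx ^ 2).sum) :
    fineMeasure w' < fineMeasure w := by
  have hbound := sum_map_sq_le_sq_sum_of_nonpos (w'.map Letter.idx)
    (by simpa using fun l hl => (hw' l hl).le)
  have hdefect : spreadDefect w' < spreadDefect w := by
    simp only [spreadDefect, hsum]
    simp only [List.map_map, Function.comp_def, hsum] at hbound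
    omega
  simp [fineMeasure, Prod.Lex.toLex_lt_toLex, allNegIndicator_eq_one hw,
    allNegIndicator_eq_one hw', nonnegDepth_eq_zero hw, nonnegDepth_eq_zero hw', hdefect]

variable [DecidablePred (· ∈ X)] {u t : List (Letter E)} {x y : Letter E}

theorem rewriteMeasure_tail_lt (hneg : ∀ l ∈ u ++ x :: y :: t, l.idx < 0) (m : ℤ) (i : ℕ) :
    rewriteMeasure X (u ++ {y with idx := m} :: {x with idx := (i : ℤ)} :: t)
      < rewriteMeasure X (u ++ x :: y :: t) := by
  refine rewriteMeasure_lt_of_fineMeasure_lt ?_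
    (fineMeasure_lt_of_allNeg hneg ⟨{x with idx := (i : ℤ)}, by simp, by simp⟩)
  simpa [Letter.key] using (List.Perm.swap (x.vec, x.wt) (y.vec, y.wt) _).append_left _

theorem rewriteMeasure_spread_lt (hneg : ∀ l ∈ u ++ x :: y :: t, l.idx < 0) {k i : ℕ}
    (hxk : x.idx = -(k + 1)) (hyk : y.idx = -(k + 1)) (hik : i ≠ k) :
    rewriteMeasure X (u ++ {x with idx := -1 - i} :: {y with idx := -2 * k - 1 + i} :: t)
      < rewriteMeasure X (u ++ x :: y :: t) := by
  refine rewriteMeasure_lt_of_fineMeasure_lt (List.Perm.of_eq (by simp [Letter.key])) ?_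
  by_cases hi : i ≤ 2 * k
  · refine fineMeasure_lt_of_sum_sq_lt hneg ?_ (by simp; omega) ?_
    · intro l hl
      simp only [List.mem_append, List.mem_cons] at hl
      rcases hl with hl | rfl | rfl | hl
      · exact hneg l (by simp [hl])
      · simp only; omega
      · simp only; omega
      · exact hneg l (by simp [hl])
    · have hsq : (0 : ℤ) < ((i : ℤ) - k) ^ 2 :=
        lt_of_le_of_ne (sq_nonneg _) (pow_ne_zero 2 (by omega)).symm
      simp [hxk, hyk]
      nlinarith
  · exact fineMeasure_lt_of_allNeg hneg
      ⟨{y with idx := -2 * k - 1 + i}, by simp, by simp; omega⟩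

end FineMeasure

section Rewriting

variable {V} (W : VOA V) (X : Set V) [DecidablePred (· ∈ X)]

def SpannedBelow (w : List (Letter V)) : Prop :=
  ∀ w', rewriteMeasure X w' < rewriteMeasure X w → WellGraded W w' →
    wordValue W w' ∈ strictSpan W X

variable {W X} {u t : List (Letter V)}

theorem SpannedBelow.mem_comap {w v : List (Letter V)} (ih : SpannedBelow W X w)
    (hlt : rewriteMeasure X (u ++ v) < rewriteMeasure X w) (hu : WellGraded W u)
    (hv : WellGraded W v) : wordValue W v ∈ (strictSpan W X).comap (wordOp W u) := by
  rw [Submodule.mem_comap, ← wordValue_append]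
  exact ih _ hlt ((wellGraded_append W).mpr ⟨hu, hv⟩)

theorem mem_strictSpan_of_wt_zero {l : Letter V} (ih : SpannedBelow W X (u ++ l :: t))
    (hw : WellGraded W (u ++ l :: t)) (hl : l.wt = 0) :
    wordValue W (u ++ l :: t) ∈ strictSpan W X := by
  simp only [wellGraded_append, wellGraded_cons] at hw
  obtain ⟨hu, hlw, ht⟩ := hw
  obtain ⟨c, hc⟩ := W.exists_eq_smul_vac (hl ▸ hlw)
  have hdrop := ih.mem_comap (v := t) (rewriteMeasure_lt_of_length_lt (by simp [weight, hl])
    (by simp)) hu ht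
  rw [wordValue_append, ← Submodule.mem_comap, wordValue_cons, hc]
  simp only [map_smul, Pi.smul_apply, LinearMap.smul_apply, W.vac_mode]
  split_ifs
  · exact Submodule.smul_mem _ c hdrop
  · simp

theorem mem_strictSpan_of_not_mem {l : Letter V} (ih : SpannedBelow W X (u ++ l :: t))
    (hw : WellGraded W (u ++ l :: t)) (hl : l.vec ∉ X)
    (hgen : W.grading l.wt = gradedXSpan W X l.wt ⊔ gradedC2Span W l.wt) :
    wordValue W (u ++ l :: t) ∈ strictSpan W X := by
  simp only [wellGraded_append, wellGraded_cons] at hw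
  obtain ⟨hu, hlw, ht⟩ := hw
  let Φ : V →ₗ[ℂ] V := (LinearMap.proj l.idx ∘ₗ W.mode).flip (wordValue W t)
  suffices W.grading l.wt ≤ ((strictSpan W X).comap (wordOp W u)).comap Φ by
    simpa [Φ, wordValue_append] using this hlw
  rw [hgen]
  refine sup_le (Submodule.span_le.mpr fun x ⟨hxX, hxw⟩ => ?_)
    (Submodule.span_le.mpr fun _ ⟨β, γ, b, c, hβ, hγ, hα, hb, hc, hz⟩ => ?_)
  · refine ih.mem_comap (v := ⟨x, l.wt, l.idx⟩ :: t) (rewriteMeasure_lt_of_nonXCount_lt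
      (by simp [weight]) (by simp) ?_) hu (by simp [hxw, ht])
    simp [nonXCount, List.countP_append, hl, hxX]
  · rw [SetLike.mem_coe, Submodule.mem_comap, hz]
    change W.mode (W.mode b (-2) c) l.idx (wordValue W t) ∈ _
    rw [W.iterate_formula_neg_two]
    refine Submodule.finsum_mem _ fun i => ?_
    refine zsmul_mem (sub_mem ?_ ?_) _
    · exact ih.mem_comap (v := ⟨b, β, -2 - i⟩ :: ⟨c, γ, l.idx + i⟩ :: t)
        (rewriteMeasure_lt_of_weight_lt (by simp [weight]; omega)) hu (by simp [hb, hc, ht])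
    · exact ih.mem_comap (v := ⟨c, γ, l.idx - 2 - i⟩ :: ⟨b, β, i⟩ :: t)
        (rewriteMeasure_lt_of_weight_lt (by simp [weight]; omega)) hu (by simp [hb, hc, ht])

theorem mem_strictSpan_of_swap {x y : Letter V} (ih : SpannedBelow W X (u ++ x :: y :: t))
    (hw : WellGraded W (u ++ x :: y :: t)) (hx : 0 < x.wt) (hy : 0 < y.wt)
    (hswap : rewriteMeasure X (u ++ y :: x :: t) < rewriteMeasure X (u ++ x :: y :: t)) :
    wordValue W (u ++ x :: y :: t) ∈ strictSpan W X := by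
  simp only [wellGraded_append, wellGraded_cons] at hw
  obtain ⟨hu, hxw, hyw, ht⟩ := hw
  rw [wordValue_append, ← Submodule.mem_comap, wordValue_cons, wordValue_cons,
    W.commutator_formula]
  refine add_mem (ih.mem_comap (v := y :: x :: t) hswap hu (by simp [hxw, hyw, ht]))
    (Submodule.finsum_mem _ fun i => ?_)
  refine zsmul_mem ?_ _
  exact ih.mem_comap (v := ⟨W.mode x.vec i y.vec, x.wt + y.wt - i - 1, x.idx + y.idx - i⟩ :: t)
    (rewriteMeasure_lt_of_weight_lt (by simp [weight]; omega)) hu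
    (by simp [W.mode_mem_grading hxw hyw i, ht])

theorem mem_strictSpan_of_nonneg_idx {w : List (Letter V)} (ih : SpannedBelow W X w)
    (hw : WellGraded W w) (hpos : ∀ l ∈ w, 0 < l.wt) (hnn : ∃ l ∈ w, 0 ≤ l.idx) :
    wordValue W w ∈ strictSpan W X := by
  obtain ⟨u, x, t, rfl, hx, ht⟩ := exists_split_at_last (fun l : Letter V => 0 ≤ l.idx) hnn
  cases t with
  | nil => simp [wordValue_append, W.creation_nonneg _ _ hx]
  | cons y t =>
    have hy : y.idx < 0 := not_le.mp (ht y (by simp))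
    have hperm : (u ++ y :: x :: t).Perm (u ++ x :: y :: t) :=
      (List.Perm.swap x y t).append_left u
    exact mem_strictSpan_of_swap ih hw (hpos x (by simp)) (hpos y (by simp))
      (rewriteMeasure_lt_of_fineMeasure_lt (hperm.map _) (fineMeasure_swap_lt_of_nonneg u t hx hy))

theorem mem_strictSpan_of_idx_eq {x y : Letter V} (ih : SpannedBelow W X (u ++ x :: y :: t))
    (hw : WellGraded W (u ++ x :: y :: t)) (hx : 0 < x.wt) (hy : 0 < y.wt)
    (hneg : ∀ l ∈ u ++ x :: y :: t, l.idx < 0) (k : ℕ) (hxk : x.idx = -(k + 1))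
    (hyk : y.idx = -(k + 1)) : wordValue W (u ++ x :: y :: t) ∈ strictSpan W X := by
  simp only [wellGraded_append, wellGraded_cons] at hw
  obtain ⟨hu, hxw, hyw, ht⟩ := hw
  set z := wordValue W t
  set q : ℤ := -2 * k - 1
  have htail (i : ℕ) : W.mode y.vec (q - 1 - i) (W.mode x.vec i z) ∈
      (strictSpan W X).comap (wordOp W u) :=
    ih.mem_comap (rewriteMeasure_tail_lt hneg (q - 1 - i) i) hu (by simp [hxw, hyw, ht])
  have hspread (i : ℕ) (hi : i ≠ k) : W.mode x.vec (-1 - i) (W.mode y.vec (q + i) z) ∈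
      (strictSpan W X).comap (wordOp W u) :=
    ih.mem_comap (rewriteMeasure_spread_lt hneg hxk hyk hi) hu (by simp [hxw, hyw, ht])
  have hmerged : W.mode (W.mode x.vec (-1) y.vec) q z ∈ (strictSpan W X).comap (wordOp W u) :=
    ih.mem_comap (v := ⟨W.mode x.vec (-1) y.vec, x.wt + y.wt, q⟩ :: t)
      (rewriteMeasure_lt_of_length_lt (by simp [weight]; omega) (by simp)) hu
      (by simpa using ⟨by simpa using W.mode_mem_grading hxw hyw (-1), ht⟩)
  -- `x_{-k-1} y_{-k-1} z` is the `i = k` term of the iterate formula for `(x_{-1}y)_{-2k-1} z`.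
  have hdiag : W.mode x.vec x.idx (W.mode y.vec y.idx z) = W.mode (W.mode x.vec (-1) y.vec) q z
      - ∑ᶠ (i) (_ : i ≠ k), (W.mode x.vec (-1 - i) (W.mode y.vec (q + i) z)
          + W.mode y.vec (q - 1 - i) (W.mode x.vec i z))
      - W.mode y.vec (q - 1 - k) (W.mode x.vec k z) := by
    rw [W.iterate_formula_neg_one, ← add_finsum_cond_ne k (W.hasFiniteSupport_iterate_neg_one ..),
      show x.idx = -1 - k by omega, show y.idx = q + k by omega]
    abel
  rw [wordValue_append, ← Submodule.mem_comap, wordValue_cons, wordValue_cons, hdiag]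
  refine sub_mem (sub_mem hmerged (Submodule.finsum_mem _ fun i => ?_)) (htail k)
  exact Submodule.finsum_mem _ fun hi => add_mem (hspread i hi) (htail i)

theorem mem_strictSpan_of_forall_idx_neg {w : List (Letter V)} (ih : SpannedBelow W X w)
    (hw : WellGraded W w) (hpos : ∀ l ∈ w, 0 < l.wt) (hX : ∀ l ∈ w, l.vec ∈ X)
    (hneg : ∀ l ∈ w, l.idx < 0) : wordValue W w ∈ strictSpan W X := by
  by_cases hchain : w.IsChain fun a b => a.idx < b.idx
  · exact wordValue_mem_strictSpan_of_isChain W X hX hneg hchain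
  obtain ⟨x, y, u, t, rfl, hxy⟩ : ∃ x y u t, w = u ++ x :: y :: t ∧ ¬ x.idx < y.idx := by
    simpa [List.isChain_iff_forall_rel_of_append_cons_cons] using hchain
  have hx := hpos x (by simp)
  have hy := hpos y (by simp)
  rcases (not_lt.mp hxy).lt_or_eq with hlt | heq
  · exact mem_strictSpan_of_swap ih hw hx hy (rewriteMeasure_lt_of_fineMeasure_lt
      (((List.Perm.swap x y t).append_left u).map _) (fineMeasure_swap_lt_of_neg u t hneg hlt))
  · obtain ⟨k, hk⟩ : ∃ k : ℕ, x.idx = -(k + 1) :=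
      ⟨(-x.idx - 1).toNat, by have := hneg x (by simp); omega⟩
    exact mem_strictSpan_of_idx_eq ih hw hx hy hneg k hk (heq ▸ hk)

variable (W X) in
theorem wordValue_mem_strictSpan
    (hgen : ∀ α, W.grading α = gradedXSpan W X α ⊔ gradedC2Span W α) {w : List (Letter V)}
    (hw : WellGraded W w) : wordValue W w ∈ strictSpan W X := by
  induction w using (InvImage.wf (rewriteMeasure X) wellFounded_lt).induction with
  | _ w ih =>
    replace ih : SpannedBelow W X w := fun w' hlt hw' => ih w' hlt hw'
    by_cases hneg : ∃ l ∈ w, l.wt < 0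
    · simp [wordValue_eq_zero_of_wt_neg W hw hneg]
    by_cases hzero : ∃ l ∈ w, l.wt = 0
    · obtain ⟨l, hl, hl0⟩ := hzero
      obtain ⟨u, t, rfl⟩ := List.append_of_mem hl
      exact mem_strictSpan_of_wt_zero ih hw hl0
    have hpos : ∀ l ∈ w, 0 < l.wt := fun l hl => by
      push Not at hneg hzero
      exact lt_of_le_of_ne (hneg l hl) (hzero l hl).symm
    by_cases hX : ∃ l ∈ w, l.vec ∉ X
    · obtain ⟨l, hl, hlX⟩ := hX
      obtain ⟨u, t, rfl⟩ := List.append_of_mem hl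
      exact mem_strictSpan_of_not_mem ih hw hlX (hgen _)
    by_cases hnn : ∃ l ∈ w, 0 ≤ l.idx
    · exact mem_strictSpan_of_nonneg_idx ih hw hpos hnn
    push Not at hX hnn
    exact mem_strictSpan_of_forall_idx_neg ih hw hpos hX hnn

end Rewriting

/-- Gaberdiel–Neitzke: representatives of a spanning set of `V/C_2(V)` span `V`
via elements with strictly increasing negative indices (difference-one condition). -/
theorem stmt9 (W : VOA V) (X : Set V) (wt : V → ℤ)
    (hhom : ∀ u ∈ X, u ∈ W.grading (wt u))
    (hspan : Submodule.span ℂ ((Cspace V W.toVertexAlg 2).mkQ '' X) = ⊤) :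
    Submodule.span ℂ { x | ∃ L : List (V × ℤ),
      (∀ p ∈ L, p.1 ∈ X) ∧
      L.Chain' (fun p q => p.2 < q.2) ∧
      (∀ p ∈ L, p.2 < 0) ∧
      x = applyModes V W.toVertexAlg L W.vac } = (⊤ : Submodule ℂ V) := by
  classical
  refine eq_top_iff.mpr (W.internal.submodule_iSup_eq_top ▸ iSup_le fun n v hv => ?_)
  have hv' : wordValue W [⟨v, n, -1⟩] = v := by simp [W.creation_neg_one]
  exact hv' ▸ wordValue_mem_strictSpan W X (grading_eq_gradedXSpan_sup W X wt hhom hspan)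
    (by simpa using hv)

end VOAPaper
end

section
/- For a vertex operator algebra V, the quotient V/C_2(V) is a Poisson algebra: the product u·v = u_{-1}v is commutative and associative on the quotient, the bracket [u,v] = u_0 v is a Lie bracket on the quotient, both operations are well defined modulo C_2(V), and the Leibniz rule [u, v·w] = [u,v]·w + v·[u,w] holds. -/
open scoped BigOperators

namespace VOAPaper

variable (V : Type) [AddCommGroup V] [Module ℂ V]

section StmtThirteenHelpers

lemma zchoose_zero' (m : ℤ) : zchoose m 0 = 1 := by
  unfold zchoose; split <;> simp

lemma zchoose_zero_left {i : ℕ} (hi : i ≠ 0) : zchoose 0 i = 0 := by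
  unfold zchoose
  simp [Nat.choose_eq_zero_of_lt (Nat.pos_of_ne_zero hi)]

variable {V : Type} [AddCommGroup V] [Module ℂ V]

lemma finsum_mem_submodule {N : Submodule ℂ V} {f : ℕ → V}
    (h : ∀ i, f i ∈ N) : (∑ᶠ i, f i) ∈ N := by
  by_cases hf : (Function.support f).Finite
  · rw [finsum_eq_sum f hf]; exact Submodule.sum_mem _ (fun i _ => h i)
  · rw [finsum_of_infinite_support hf]; exact N.zero_mem

lemma finsum_sub_head_mem {N : Submodule ℂ V} {f : ℕ → V}
    (hf : (Function.support f).Finite) (h : ∀ i, i ≠ 0 → f i ∈ N) :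
    (∑ᶠ i, f i) - f 0 ∈ N := by
  classical
  have hg : (Function.support fun i : ℕ => if i = 0 then f 0 else 0).Finite := by
    apply Set.Finite.subset (Set.finite_singleton 0)
    intro x hx
    simp only [Function.mem_support] at hx
    by_contra hne
    simp_all
  have hh : (Function.support fun i : ℕ => if i = 0 then (0:V) else f i).Finite := by
    apply hf.subset
    intro x hx
    simp only [Function.mem_support] at hx ⊢
    intro h0; apply hx; simp [h0]
  have h1 : ∑ᶠ i, f i = f 0 + ∑ᶠ i, (if i = 0 then 0 else f i) := by
    calc ∑ᶠ i, f i
        = ∑ᶠ i, ((if i = 0 then f 0 else 0) + (if i = 0 then 0 else f i)) := by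
          congr 1; funext i; by_cases h0 : i = 0 <;> simp [h0]
      _ = f 0 + ∑ᶠ i, (if i = 0 then 0 else f i) := by
          rw [finsum_add_distrib hg hh,
            finsum_eq_single (fun i : ℕ => if i = 0 then f 0 else 0) 0
              (fun x hx => by simp [hx])]
          simp
  rw [h1]
  have h2 : (∑ᶠ i : ℕ, (if i = 0 then 0 else f i)) ∈ N :=
    finsum_mem_submodule (fun i => by
      by_cases h0 : i = 0
      · simp [h0]
      · simpa [h0] using h i h0)
  simpa using h2

variable (W : VOA V)

/-- Finiteness of support of the left side of the Borcherds identity. -/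
lemma supportL (u v w : V) (p q m : ℤ) :
    (Function.support fun i : ℕ =>
      zchoose m i • W.mode (W.mode u (p + (i:ℤ)) v) (m + q - (i:ℤ)) w).Finite := by
  obtain ⟨N, hN⟩ := W.trunc u v
  apply Set.Finite.subset (Set.finite_Iio (N - p).toNat)
  intro i hi
  simp only [Function.mem_support] at hi
  simp only [Set.mem_Iio]
  by_contra hge
  push_neg at hge
  have hpi : N ≤ p + (i:ℤ) := by omega
  apply hi
  rw [hN _ hpi, map_zero]
  simp

/-- Finiteness of support of the right side of the Borcherds identity. -/
lemma supportR (u v w : V) (p q m : ℤ) :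
    (Function.support fun i : ℕ => ((-1 : ℤ) ^ i * zchoose p i) •
      (W.mode u (p + m - (i:ℤ)) (W.mode v (q + (i:ℤ)) w)
        - ((p.negOnePow : ℤˣ) : ℤ) • W.mode v (p + q - (i:ℤ)) (W.mode u (m + (i:ℤ)) w))).Finite := by
  obtain ⟨N1, h1⟩ := W.trunc v w
  obtain ⟨N2, h2⟩ := W.trunc u w
  apply Set.Finite.subset (Set.finite_Iio (max (N1 - q).toNat (N2 - m).toNat))
  intro i hi
  simp only [Function.mem_support] at hi
  simp only [Set.mem_Iio]
  by_contra hge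
  push_neg at hge
  rw [max_le_iff] at hge
  have hq : N1 ≤ q + (i:ℤ) := by omega
  have hm : N2 ≤ m + (i:ℤ) := by omega
  apply hi
  rw [h1 _ hq, h2 _ hm]
  simp

/-- Generators of `C_2(V)`. -/
lemma gen_mem (x y : V) : W.mode x (-2) y ∈ Cspace V W.toVertexAlg 2 := by
  apply Submodule.subset_span
  refine ⟨x, y, ?_⟩
  norm_num

/-- `x_{-2-k} y ∈ C_2(V)`. -/
lemma mode_neg_mem : ∀ (k : ℕ) (x y : V),
    W.mode x (-2 - (k:ℤ)) y ∈ Cspace V W.toVertexAlg 2 := by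
  intro k
  induction k with
  | zero => intro x y; simpa using gen_mem W x y
  | succ k ih =>
    intro x y
    have hIH := ih (W.mode W.ω 0 x) y
    have hd := W.Lneg1_deriv x (-2 - (k:ℤ))
    have he : W.mode (W.mode W.ω 0 x) (-2 - (k:ℤ)) y
        = ((2 + (k:ℤ))) • W.mode x (-2 - ((k:ℕ)+1:ℕ)) y := by
      rw [hd]
      have h1 : (-(-2 - (k:ℤ))) = 2 + (k:ℤ) := by ring
      have h2 : (-2 - (k:ℤ) - 1) = -2 - (((k:ℕ)+1:ℕ):ℤ) := by push_cast; ring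
      rw [h1, h2]
      rfl
    rw [he] at hIH
    have hc : ((2 + (k:ℤ) : ℤ) : ℂ) ≠ 0 := by
      rw [Int.cast_ne_zero]; omega
    rw [← Int.cast_smul_eq_zsmul ℂ] at hIH
    have := Submodule.smul_mem (Cspace V W.toVertexAlg 2) (((2 + (k:ℤ) : ℤ) : ℂ))⁻¹ hIH
    rwa [inv_smul_smul₀ hc] at this

/-- `x_n y ∈ C_2(V)` for `n ≤ -2`. -/
lemma mode_le_neg_two {n : ℤ} (hn : n ≤ -2) (x y : V) :
    W.mode x n y ∈ Cspace V W.toVertexAlg 2 := by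
  have h : n = -2 - (((-2 - n).toNat : ℕ) : ℤ) := by omega
  rw [h]
  exact mode_neg_mem W _ x y

/-- Exact commutator formula: `(u_0 v)_q w = u_0 (v_q w) - v_q (u_0 w)`. -/
lemma exact_comm (u v w : V) (q : ℤ) :
    W.mode (W.mode u 0 v) q w
      = W.mode u 0 (W.mode v q w) - W.mode v q (W.mode u 0 w) := by
  have h := W.borcherds u v w 0 q 0
  have hL := finsum_eq_single
    (fun i : ℕ => zchoose 0 i • W.mode (W.mode u (0 + (i:ℤ)) v) (0 + q - (i:ℤ)) w) 0
    (fun x hx => by simp [zchoose_zero_left hx])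
  have hR := finsum_eq_single
    (fun i : ℕ => ((-1 : ℤ) ^ i * zchoose 0 i) •
      (W.mode u (0 + 0 - (i:ℤ)) (W.mode v (q + (i:ℤ)) w)
        - (((0:ℤ).negOnePow : ℤˣ) : ℤ) • W.mode v (0 + q - (i:ℤ)) (W.mode u (0 + (i:ℤ)) w))) 0
    (fun x hx => by simp [zchoose_zero_left hx])
  have key := (hL.symm.trans h).trans hR
  simpa [zchoose_zero'] using key

/-- Invariance of `C_2(V)` under `u_m` for `m ≤ 0`. -/
lemma right_mem (u : V) {m : ℤ} (hm : m ≤ 0) {a : V}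
    (ha : a ∈ Cspace V W.toVertexAlg 2) : W.mode u m a ∈ Cspace V W.toVertexAlg 2 := by
  induction ha using Submodule.span_induction with
  | mem x hx =>
    obtain ⟨b, c, rfl⟩ := hx
    have hcast : (-((2:ℕ):ℤ)) = (-2 : ℤ) := by norm_num
    rw [hcast]
    have h := W.borcherds u b c 0 (-2) m
    have hR : (∑ᶠ i : ℕ, ((-1 : ℤ) ^ i * zchoose 0 i) •
        (W.mode u (0 + m - (i:ℤ)) (W.mode b (-2 + (i:ℤ)) c)
          - (((0:ℤ).negOnePow : ℤˣ) : ℤ) • W.mode b (0 + -2 - (i:ℤ)) (W.mode u (m + (i:ℤ)) c)))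
        = ((-1 : ℤ) ^ (0:ℕ) * zchoose 0 0) •
        (W.mode u (0 + m - ((0:ℕ):ℤ)) (W.mode b (-2 + ((0:ℕ):ℤ)) c)
          - (((0:ℤ).negOnePow : ℤˣ) : ℤ) • W.mode b (0 + -2 - ((0:ℕ):ℤ)) (W.mode u (m + ((0:ℕ):ℤ)) c)) :=
      finsum_eq_single _ 0 (fun j hj => by simp [zchoose_zero_left hj])
    have hmem : (∑ᶠ i : ℕ, zchoose m i • W.mode (W.mode u (0 + (i:ℤ)) b) (m + -2 - (i:ℤ)) c)
        ∈ Cspace V W.toVertexAlg 2 :=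
      finsum_mem_submodule (fun i => zsmul_mem (mode_le_neg_two W (by omega) _ _) _)
    rw [h, hR] at hmem
    have e : ((-1 : ℤ) ^ (0:ℕ) * zchoose 0 0) •
        (W.mode u (0 + m - ((0:ℕ):ℤ)) (W.mode b (-2 + ((0:ℕ):ℤ)) c)
          - (((0:ℤ).negOnePow : ℤˣ) : ℤ) • W.mode b (0 + -2 - ((0:ℕ):ℤ)) (W.mode u (m + ((0:ℕ):ℤ)) c))
        = W.mode u m (W.mode b (-2) c) - W.mode b (-2) (W.mode u m c) := by
      norm_num [zchoose_zero']
    rw [e] at hmem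
    have hgen : W.mode b (-2) (W.mode u m c) ∈ Cspace V W.toVertexAlg 2 := gen_mem W _ _
    have heq : W.mode u m (W.mode b (-2) c)
        = (W.mode u m (W.mode b (-2) c) - W.mode b (-2) (W.mode u m c))
          + W.mode b (-2) (W.mode u m c) := by abel
    rw [heq]
    exact add_mem hmem hgen
  | zero => simp only [map_zero]; exact Submodule.zero_mem _
  | add x y hx hy ihx ihy =>
    rw [map_add]
    exact add_mem ihx ihy
  | smul c x hx ihx =>
    rw [map_smul]
    exact Submodule.smul_mem _ c ihx

/-- `(x_{-2} y)_q w ∈ C_2(V)` for `q ≤ 0`. -/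
lemma leftGen (x y w : V) {q : ℤ} (hq : q ≤ 0) :
    W.mode (W.mode x (-2) y) q w ∈ Cspace V W.toVertexAlg 2 := by
  have h := W.borcherds x y w (-2) q 0
  have hL : (∑ᶠ i : ℕ, zchoose 0 i • W.mode (W.mode x (-2 + (i:ℤ)) y) (0 + q - (i:ℤ)) w)
      = zchoose 0 0 • W.mode (W.mode x (-2 + ((0:ℕ):ℤ)) y) (0 + q - ((0:ℕ):ℤ)) w :=
    finsum_eq_single _ 0 (fun j hj => by simp [zchoose_zero_left hj])
  have hmem : (∑ᶠ i : ℕ, ((-1 : ℤ) ^ i * zchoose (-2) i) •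
      (W.mode x (-2 + 0 - (i:ℤ)) (W.mode y (q + (i:ℤ)) w)
        - (((-2:ℤ).negOnePow : ℤˣ) : ℤ) • W.mode y (-2 + q - (i:ℤ)) (W.mode x (0 + (i:ℤ)) w)))
      ∈ Cspace V W.toVertexAlg 2 :=
    finsum_mem_submodule (fun i => zsmul_mem
      (sub_mem (mode_le_neg_two W (by omega) _ _)
        (zsmul_mem (mode_le_neg_two W (by omega) _ _) _)) _)
  rw [← h, hL] at hmem
  have e : zchoose 0 0 • W.mode (W.mode x (-2 + ((0:ℕ):ℤ)) y) (0 + q - ((0:ℕ):ℤ)) w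
      = W.mode (W.mode x (-2) y) q w := by norm_num [zchoose_zero']
  rwa [e] at hmem

/-- Left multiplication by elements of `C_2(V)` with nonpositive mode stays in `C_2(V)`. -/
lemma left_mem {q : ℤ} (hq : q ≤ 0) (w : V) {a : V}
    (ha : a ∈ Cspace V W.toVertexAlg 2) : W.mode a q w ∈ Cspace V W.toVertexAlg 2 := by
  induction ha using Submodule.span_induction with
  | mem x hx =>
    obtain ⟨b, c, rfl⟩ := hx
    have hcast : (-((2:ℕ):ℤ)) = (-2 : ℤ) := by norm_num
    rw [hcast]
    exact leftGen W b c w hq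
  | zero =>
    rw [map_zero]
    simp only [Pi.zero_apply, LinearMap.zero_apply]
    exact Submodule.zero_mem _
  | add x y hx hy ihx ihy =>
    rw [map_add]
    simp only [Pi.add_apply, LinearMap.add_apply]
    exact add_mem ihx ihy
  | smul c x hx ihx =>
    rw [map_smul]
    simp only [Pi.smul_apply, LinearMap.smul_apply]
    exact Submodule.smul_mem _ c ihx

/-- Skew symmetry mod `C_2(V)`: `u_p v + (-1)^p v_p u ∈ C_2(V)`. -/
lemma skew_mem (u v : V) (p : ℤ) :
    W.mode u p v + ((p.negOnePow : ℤˣ) : ℤ) • W.mode v p u ∈ Cspace V W.toVertexAlg 2 := by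
  have h := W.borcherds u v W.vac p 0 (-1)
  have hR : (∑ᶠ i : ℕ, ((-1 : ℤ) ^ i * zchoose p i) •
      (W.mode u (p + -1 - (i:ℤ)) (W.mode v (0 + (i:ℤ)) W.vac)
        - ((p.negOnePow : ℤˣ) : ℤ) • W.mode v (p + 0 - (i:ℤ)) (W.mode u (-1 + (i:ℤ)) W.vac)))
      = ((-1 : ℤ) ^ (0:ℕ) * zchoose p 0) •
      (W.mode u (p + -1 - ((0:ℕ):ℤ)) (W.mode v (0 + ((0:ℕ):ℤ)) W.vac)
        - ((p.negOnePow : ℤˣ) : ℤ) • W.mode v (p + 0 - ((0:ℕ):ℤ)) (W.mode u (-1 + ((0:ℕ):ℤ)) W.vac)) :=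
    finsum_eq_single _ 0 (fun j hj => by
      rw [W.creation_nonneg v (0 + (j:ℤ)) (by omega),
        W.creation_nonneg u (-1 + (j:ℤ)) (by omega)]
      simp)
  have key : (∑ᶠ i : ℕ, zchoose (-1) i • W.mode (W.mode u (p + (i:ℤ)) v) (-1 + 0 - (i:ℤ)) W.vac)
      - zchoose (-1) 0 • W.mode (W.mode u (p + ((0:ℕ):ℤ)) v) (-1 + 0 - ((0:ℕ):ℤ)) W.vac
      ∈ Cspace V W.toVertexAlg 2 :=
    finsum_sub_head_mem (supportL W u v W.vac p 0 (-1))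
      (fun i hi => zsmul_mem (mode_le_neg_two W (by omega) _ _) _)
  rw [h, hR] at key
  have e1 : zchoose (-1) 0 • W.mode (W.mode u (p + ((0:ℕ):ℤ)) v) (-1 + 0 - ((0:ℕ):ℤ)) W.vac
      = W.mode u p v := by
    norm_num [zchoose_zero', W.creation_neg_one]
  have e2 : ((-1 : ℤ) ^ (0:ℕ) * zchoose p 0) •
      (W.mode u (p + -1 - ((0:ℕ):ℤ)) (W.mode v (0 + ((0:ℕ):ℤ)) W.vac)
        - ((p.negOnePow : ℤˣ) : ℤ) • W.mode v (p + 0 - ((0:ℕ):ℤ)) (W.mode u (-1 + ((0:ℕ):ℤ)) W.vac))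
      = -(((p.negOnePow : ℤˣ) : ℤ) • W.mode v p u) := by
    rw [W.creation_nonneg v (0 + ((0:ℕ):ℤ)) (by norm_num)]
    norm_num [zchoose_zero', W.creation_neg_one]
  rw [e1, e2] at key
  have heq : W.mode u p v + ((p.negOnePow : ℤˣ) : ℤ) • W.mode v p u
      = -(-(((p.negOnePow : ℤˣ) : ℤ) • W.mode v p u) - W.mode u p v) := by abel
  rw [heq]
  exact neg_mem key

end StmtThirteenHelpers

/-- `V/C_2(V)` is a Poisson algebra: the product `u·v = u_{-1}v` and bracket
`[u,v] = u_0 v` are well defined mod `C_2(V)`, the product is commutative and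
associative, the bracket is a Lie bracket, and the Leibniz rule holds. -/
theorem stmt13 (W : VOA V) :
    (∀ u u' v v' : V, u - u' ∈ Cspace V W.toVertexAlg 2 →
        v - v' ∈ Cspace V W.toVertexAlg 2 →
        W.mode u (-1) v - W.mode u' (-1) v' ∈ Cspace V W.toVertexAlg 2) ∧
    (∀ u u' v v' : V, u - u' ∈ Cspace V W.toVertexAlg 2 →
        v - v' ∈ Cspace V W.toVertexAlg 2 →
        W.mode u 0 v - W.mode u' 0 v' ∈ Cspace V W.toVertexAlg 2) ∧
    (∀ u v : V, W.mode u (-1) v - W.mode v (-1) u ∈ Cspace V W.toVertexAlg 2) ∧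
    (∀ u v w : V, W.mode u (-1) (W.mode v (-1) w)
        - W.mode (W.mode u (-1) v) (-1) w ∈ Cspace V W.toVertexAlg 2) ∧
    (∀ u v : V, W.mode u 0 v + W.mode v 0 u ∈ Cspace V W.toVertexAlg 2) ∧
    (∀ u v w : V, W.mode u 0 (W.mode v 0 w) - W.mode v 0 (W.mode u 0 w)
        - W.mode (W.mode u 0 v) 0 w ∈ Cspace V W.toVertexAlg 2) ∧
    (∀ u v w : V, W.mode u 0 (W.mode v (-1) w)
        - W.mode (W.mode u 0 v) (-1) w
        - W.mode v (-1) (W.mode u 0 w) ∈ Cspace V W.toVertexAlg 2) := by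
  refine ⟨?_, ?_, ?_, ?_, ?_, ?_, ?_⟩
  · -- product well defined
    intro u u' v v' hu hv
    have e : W.mode u (-1) v - W.mode u' (-1) v'
        = W.mode (u - u') (-1) v + W.mode u' (-1) (v - v') := by
      simp only [map_sub, Pi.sub_apply, LinearMap.sub_apply]
      abel
    rw [e]
    exact add_mem (left_mem W (by norm_num) v hu) (right_mem W u' (by norm_num) hv)
  · -- bracket well defined
    intro u u' v v' hu hv
    have e : W.mode u 0 v - W.mode u' 0 v'
        = W.mode (u - u') 0 v + W.mode u' 0 (v - v') := by
      simp only [map_sub, Pi.sub_apply, LinearMap.sub_apply]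
      abel
    rw [e]
    exact add_mem (left_mem W (by norm_num) v hu) (right_mem W u' (by norm_num) hv)
  · -- commutativity
    intro u v
    have h := skew_mem W u v (-1)
    simpa [sub_eq_add_neg] using h
  · -- associativity
    intro u v w
    have h := W.borcherds u v w (-1) (-1) 0
    have hL : (∑ᶠ i : ℕ, zchoose 0 i • W.mode (W.mode u (-1 + (i:ℤ)) v) (0 + -1 - (i:ℤ)) w)
        = zchoose 0 0 • W.mode (W.mode u (-1 + ((0:ℕ):ℤ)) v) (0 + -1 - ((0:ℕ):ℤ)) w :=
      finsum_eq_single _ 0 (fun j hj => by simp [zchoose_zero_left hj])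
    have key : (∑ᶠ i : ℕ, ((-1 : ℤ) ^ i * zchoose (-1) i) •
        (W.mode u (-1 + 0 - (i:ℤ)) (W.mode v (-1 + (i:ℤ)) w)
          - (((-1:ℤ).negOnePow : ℤˣ) : ℤ) • W.mode v (-1 + -1 - (i:ℤ)) (W.mode u (0 + (i:ℤ)) w)))
        - ((-1 : ℤ) ^ (0:ℕ) * zchoose (-1) 0) •
        (W.mode u (-1 + 0 - ((0:ℕ):ℤ)) (W.mode v (-1 + ((0:ℕ):ℤ)) w)
          - (((-1:ℤ).negOnePow : ℤˣ) : ℤ) • W.mode v (-1 + -1 - ((0:ℕ):ℤ)) (W.mode u (0 + ((0:ℕ):ℤ)) w))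
        ∈ Cspace V W.toVertexAlg 2 :=
      finsum_sub_head_mem (supportR W u v w (-1) (-1) 0)
        (fun i hi => zsmul_mem (sub_mem (mode_le_neg_two W (by omega) _ _)
          (zsmul_mem (mode_le_neg_two W (by omega) _ _) _)) _)
    rw [← h, hL] at key
    have e1 : zchoose 0 0 • W.mode (W.mode u (-1 + ((0:ℕ):ℤ)) v) (0 + -1 - ((0:ℕ):ℤ)) w
        = W.mode (W.mode u (-1) v) (-1) w := by norm_num [zchoose_zero']
    have e2 : ((-1 : ℤ) ^ (0:ℕ) * zchoose (-1) 0) •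
        (W.mode u (-1 + 0 - ((0:ℕ):ℤ)) (W.mode v (-1 + ((0:ℕ):ℤ)) w)
          - (((-1:ℤ).negOnePow : ℤˣ) : ℤ) • W.mode v (-1 + -1 - ((0:ℕ):ℤ)) (W.mode u (0 + ((0:ℕ):ℤ)) w))
        = W.mode u (-1) (W.mode v (-1) w) + W.mode v (-2) (W.mode u 0 w) := by
      norm_num [zchoose_zero']
    rw [e1, e2] at key
    have heq : W.mode u (-1) (W.mode v (-1) w) - W.mode (W.mode u (-1) v) (-1) w
        = -(W.mode (W.mode u (-1) v) (-1) w
            - (W.mode u (-1) (W.mode v (-1) w) + W.mode v (-2) (W.mode u 0 w)))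
          - W.mode v (-2) (W.mode u 0 w) := by abel
    rw [heq]
    exact sub_mem (neg_mem key) (mode_le_neg_two W (by norm_num) v _)
  · -- antisymmetry of the bracket
    intro u v
    have h := skew_mem W u v 0
    simpa using h
  · -- Jacobi identity
    intro u v w
    rw [exact_comm W u v w 0, sub_self]
    exact Submodule.zero_mem _
  · -- Leibniz rule
    intro u v w
    rw [exact_comm W u v w (-1)]
    have heq : W.mode u 0 (W.mode v (-1) w)
        - (W.mode u 0 (W.mode v (-1) w) - W.mode v (-1) (W.mode u 0 w))
        - W.mode v (-1) (W.mode u 0 w) = 0 := by abel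
    rw [heq]
    exact Submodule.zero_mem _

end VOAPaper
end
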